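/- arXiv:2107.04651 — 3 statements merged into one kernel-verified Lean document; each statement's English description precedes it below -/
import Mathlib

section
/- Let f : ℝ → ℝ be a nonnegative C¹ function on [t₀,∞) such that its derivative is bounded, |f'(t)| ≤ M for all t ≥ t₀, and such that the improper integral ∫_{t₀}^∞ f(s) ds converges. Then lim_{t→∞} f(t) = 0. -/
open Set Filter Topology MeasureTheory
open scoped NNReal

/-!
A bounded derivative makes `f` Lipschitz, say with constant `K`. If `‖f t‖ = c`, then
`‖f‖ ≥ c / 2` on `[t, t + c / (2K)]`, so `c² ≤ 4K ∫_t^∞ ‖f‖`, and this tail integral tends to `0`.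
-/

theorem tendsto_setIntegral_Ici_atTop_zero {E : Type*} [NormedAddCommGroup E] [NormedSpace ℝ E]
    {f : ℝ → E} {a : ℝ} (hf : IntegrableOn f (Ici a)) :
    Tendsto (fun t ↦ ∫ x in Ici t, f x) atTop (𝓝 0) := by
  have hempty : ⋂ t : ℝ, Ici t = ∅ :=
    eq_empty_of_forall_notMem fun x hx ↦ absurd (mem_iInter.1 hx (x + 1)) (by simp)
  simpa [hempty] using
    tendsto_setIntegral_of_antitone (fun _ ↦ measurableSet_Ici)
      (fun _ _ h ↦ Ici_subset_Ici.2 h) ⟨a, hf⟩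

theorem norm_sq_le_mul_setIntegral_Ici_of_lipschitzOnWith {E : Type*} [NormedAddCommGroup E]
    {f : ℝ → E} {K : ℝ≥0} {t : ℝ} (hK : 0 < K) (hf : LipschitzOnWith K f (Ici t))
    (hint : IntegrableOn (fun s ↦ ‖f s‖) (Ici t)) :
    ‖f t‖ ^ 2 ≤ 4 * K * ∫ s in Ici t, ‖f s‖ := by
  set c := ‖f t‖
  set L := c / (2 * K)
  have hL : 0 ≤ L := by positivity
  have hKL : (K : ℝ) * L = c / 2 := by simp only [L]; field_simp
  have hsub : Icc t (t + L) ⊆ Ici t := Icc_subset_Ici_self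
  have hhalf : ∀ s ∈ Icc t (t + L), c / 2 ≤ ‖f s‖ := by
    intro s hs
    have hdist : ‖f t - f s‖ ≤ K * (s - t) := by
      have := hf.dist_le_mul t (mem_Ici.2 le_rfl) s (hsub hs)
      rwa [dist_eq_norm, Real.dist_eq, abs_sub_comm, abs_of_nonneg (sub_nonneg.2 hs.1)] at this
    have hsL : (K : ℝ) * (s - t) ≤ K * L := by gcongr; linarith [hs.2]
    linarith [norm_sub_norm_le (f t) (f s)]
  calc ‖f t‖ ^ 2 = 4 * K * (c / 2 * L) := by linear_combination (-2 * c) * hKL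
    _ ≤ 4 * K * ∫ s in Icc t (t + L), ‖f s‖ := by
      refine mul_le_mul_of_nonneg_left ?_ (by positivity)
      simpa [Real.volume_Icc, hL] using
        setIntegral_ge_of_const_le_real measurableSet_Icc (by simp) hhalf (hint.mono_set hsub)
    _ ≤ 4 * K * ∫ s in Ici t, ‖f s‖ := by
      refine mul_le_mul_of_nonneg_left ?_ (by positivity)
      exact setIntegral_mono_set hint (Eventually.of_forall fun _ ↦ norm_nonneg _)
        (Eventually.of_forall hsub)

theorem tendsto_zero_of_lipschitzOnWith_of_integrableOn {E : Type*} [NormedAddCommGroup E]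
    {f : ℝ → E} {K : ℝ≥0} {a : ℝ} (hf : LipschitzOnWith K f (Ici a))
    (hint : IntegrableOn f (Ici a)) :
    Tendsto f atTop (𝓝 0) := by
  have hK : LipschitzOnWith (K + 1) f (Ici a) := hf.weaken le_self_add
  have hbound : ∀ᶠ t in atTop, ‖f t‖ ≤ √(4 * (K + 1 : ℝ≥0) * ∫ s in Ici t, ‖f s‖) := by
    filter_upwards [eventually_ge_atTop a] with t ht
    exact Real.le_sqrt_of_sq_le <| norm_sq_le_mul_setIntegral_Ici_of_lipschitzOnWith
      (by positivity) (hK.mono (Ici_subset_Ici.2 ht)) (hint.mono_set (Ici_subset_Ici.2 ht)).norm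
  have htail : Tendsto (fun t ↦ √(4 * (K + 1 : ℝ≥0) * ∫ s in Ici t, ‖f s‖)) atTop (𝓝 0) := by
    simpa using ((tendsto_setIntegral_Ici_atTop_zero hint.norm).const_mul _).sqrt
  exact tendsto_zero_iff_norm_tendsto_zero.2 <|
    squeeze_zero' (Eventually.of_forall fun _ ↦ norm_nonneg _) hbound htail

theorem barbalat_nonneg_bounded_deriv_general
    (t₀ M : ℝ) (f f' : ℝ → ℝ)
    (hderiv : ∀ t, t₀ ≤ t → HasDerivAt f (f' t) t)
    (hbound : ∀ t, t₀ ≤ t → |f' t| ≤ M)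
    (hint : MeasureTheory.IntegrableOn f (Ici t₀)) :
    Tendsto f atTop (𝓝 0) := by
  have hlip : LipschitzOnWith M.toNNReal f (Ici t₀) :=
    (convex_Ici t₀).lipschitzOnWith_of_nnnorm_hasDerivWithin_le
      (fun t ht ↦ (hderiv t ht).hasDerivWithinAt) fun t ht ↦ by
        simpa [← NNReal.coe_le_coe] using (hbound t ht).trans (le_max_left M 0)
  exact tendsto_zero_of_lipschitzOnWith_of_integrableOn hlip hint

/-- Barbalat-type lemma: a nonnegative `C¹` function on `[t₀, ∞)` with bounded derivative whose
improper integral converges tends to `0` at infinity. -/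
theorem barbalat_nonneg_bounded_deriv
    (t₀ M : ℝ) (f f' : ℝ → ℝ)
    (hnonneg : ∀ t, t₀ ≤ t → 0 ≤ f t)
    (hderiv : ∀ t, t₀ ≤ t → HasDerivAt f (f' t) t)
    (hf'cont : ContinuousOn f' (Ici t₀))
    (hbound : ∀ t, t₀ ≤ t → |f' t| ≤ M)
    (hint : MeasureTheory.IntegrableOn f (Ici t₀)) :
    Tendsto f atTop (𝓝 0) :=
  barbalat_nonneg_bounded_deriv_general t₀ M f f' hderiv hbound hint
end

section
/- Let H, ρ, φ₁, φ₂ be C¹ solutions on [t₀,∞) of the system: 3H² = ρ + ½φ̇₁² + ½φ̇₂² + V(φ₁,φ₂) (Friedmann constraint), 2Ḣ = −ρ − φ̇₁² − φ̇₂² (Raychaudhuri), ρ̇ + 3Hρ = 0 with ρ ≥ 0, the Klein–Gordon equations φ̈ᵢ + 3Hφ̇ᵢ + ∂V/∂φᵢ = 0, where V(φ₁,φ₂) = 2μ₁⁴sin²(φ₁/(2f₁)) + 2μ₂⁴sin²(φ₂/(2f₂)) + 2μ₃⁴sin²(φ₁/(2f₁) − nφ₂/(2f₂)) with f₁, f₂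 ≠ 0, and suppose H(t₀) > 0 and H(t) > 0 for all t ≥ t₀. Then lim_{t→∞} (ρ(t), φ̇₁(t), φ̇₂(t)) = (0,0,0) and lim_{t→∞} [3H(t)² − V(φ₁(t),φ₂(t))] = 0. -/
/-!
Write `E = ρ + φ̇₁²/2 + φ̇₂²/2`, which by the Friedmann constraint equals `3H² - V`. The
Raychaudhuri equation gives `2Ḣ ≤ -E ≤ 0`, so `H` decreases and, staying positive, bounds
`∫ E` by `2 H(t₀)`. As `V ≥ 0`, the Friedmann constraint bounds `ρ` and `φ̇ᵢ` via `H(t₀)`; the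
continuity and Klein–Gordon equations (whose potential forces are bounded sines) then bound `ρ̇`
and `φ̈ᵢ`, so `Ė` is bounded. A nonnegative integrable function with bounded derivative tends to
zero (Barbalat), and `ρ`, `φ̇₁²`, `φ̇₂²` are all dominated by `2E`.
-/

open Set Filter Topology Real Asymptotics

theorem sub_le_mul_sub_of_hasDerivAt_le {f f' : ℝ → ℝ} {a b C : ℝ} (hab : a ≤ b)
    (hf : ∀ x ∈ Icc a b, HasDerivAt f (f' x) x) (hf' : ∀ x ∈ Icc a b, f' x ≤ C) :
    f b - f a ≤ C * (b - a) :=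
  (convex_Icc a b).image_sub_le_mul_sub_of_deriv_le
    (fun x hx => (hf x hx).continuousAt.continuousWithinAt)
    (fun x hx => (hf x (interior_subset hx)).differentiableAt.differentiableWithinAt)
    (fun x hx => (hf x (interior_subset hx)).deriv ▸ hf' x (interior_subset hx))
    a (left_mem_Icc.2 hab) b (right_mem_Icc.2 hab) hab

theorem exists_tendsto_of_antitoneOn_Ici {F : ℝ → ℝ} {a m : ℝ} (hF : AntitoneOn F (Ici a))
    (hm : ∀ t ≥ a, m ≤ F t) : ∃ ℓ, Tendsto F atTop (𝓝 ℓ) := by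
  have hanti : Antitone fun t => F (max a t) := fun s t hst =>
    hF (le_max_left a s) (le_max_left a t) (max_le_max le_rfl hst)
  refine ⟨_, (tendsto_atTop_ciInf hanti ⟨m, ?_⟩).congr' ?_⟩
  · rintro _ ⟨t, rfl⟩
    exact hm _ (le_max_left a t)
  · filter_upwards [eventually_ge_atTop a] with t ht
    rw [max_eq_right ht]

theorem sub_le_neg_mul_of_hasDerivAt_le_neg {E E' F F' : ℝ → ℝ} {s δ C : ℝ} (hδ : 0 ≤ δ)
    (hE : ∀ t ∈ Icc s (s + δ), HasDerivAt E (E' t) t)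
    (hE' : ∀ t ∈ Icc s (s + δ), |E' t| ≤ C)
    (hF : ∀ t ∈ Icc s (s + δ), HasDerivAt F (F' t) t)
    (hF' : ∀ t ∈ Icc s (s + δ), F' t ≤ -E t) :
    F (s + δ) - F s ≤ -(E s - C * δ) * δ := by
  have hs : s ∈ Icc s (s + δ) := left_mem_Icc.2 (le_add_of_nonneg_right hδ)
  have hC : 0 ≤ C := (abs_nonneg _).trans (hE' s hs)
  have hE_ge : ∀ t ∈ Icc s (s + δ), E s - C * δ ≤ E t := by
    intro t ht
    have hmvt := (convex_Icc s (s + δ)).norm_image_sub_le_of_norm_hasDerivWithin_le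
      (fun x hx => (hE x hx).hasDerivWithinAt) hE' hs ht
    rw [Real.norm_eq_abs, Real.norm_eq_abs, abs_of_nonneg (sub_nonneg.2 ht.1)] at hmvt
    nlinarith [(abs_le.1 hmvt).1, ht.2]
  simpa using sub_le_mul_sub_of_hasDerivAt_le (le_add_of_nonneg_right hδ) hF
    fun t ht => (hF' t ht).trans (neg_le_neg (hE_ge t ht))

/-- Barbalat's lemma; `F' ≤ -E` with `F` bounded below encodes `∫ E < ∞`. The antitone `F`
converges, so its increments over a fixed length `δ` tend to `0`; but if `E t ≥ ε` then
`E ≥ ε / 2` on `[t, t + δ]` for `δ = ε / (2 sup |E'|)`, and `F` drops there by `ε δ / 2`. -/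
theorem tendsto_zero_of_hasDerivAt_le_neg {E E' F F' : ℝ → ℝ} {m : ℝ}
    (hE : ∀ᶠ t in atTop, HasDerivAt E (E' t) t) (hE' : BoundedAtFilter atTop E')
    (hE0 : ∀ᶠ t in atTop, 0 ≤ E t) (hF : ∀ᶠ t in atTop, HasDerivAt F (F' t) t)
    (hF' : ∀ᶠ t in atTop, F' t ≤ -E t) (hFm : ∀ᶠ t in atTop, m ≤ F t) :
    Tendsto E atTop (𝓝 0) := by
  obtain ⟨C, hC, hE'C⟩ := hE'.exists_pos
  obtain ⟨a, ha⟩ := eventually_atTop.1 <|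
    hE.and <| hE'C.bound.and <| hE0.and <| hF.and <| hF'.and hFm
  simp only [Pi.one_apply, norm_one, mul_one, Real.norm_eq_abs, imp_and, forall_and] at ha
  obtain ⟨hEa, hE'a, hE0a, hFa, hF'a, hFma⟩ := ha
  have hFanti : AntitoneOn F (Ici a) := fun s hs t _ hst => by
    have := sub_le_mul_sub_of_hasDerivAt_le hst (fun x hx => hFa x (hs.trans hx.1))
      fun x hx => (hF'a x (hs.trans hx.1)).trans (neg_nonpos.2 (hE0a x (hs.trans hx.1)))
    linarith
  obtain ⟨ℓ, hℓ⟩ := exists_tendsto_of_antitoneOn_Ici hFanti hFma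
  refine tendsto_order.2 ⟨fun ε hε => hE0.mono fun t ht => hε.trans_le ht, fun ε hε => ?_⟩
  set δ := ε / (2 * C)
  have hδ : 0 < δ := by positivity
  have hCδ : C * δ = ε / 2 := by simp only [δ]; field_simp
  have hF_incr : Tendsto (fun t => F (t + δ) - F t) atTop (𝓝 0) := by
    simpa using (hℓ.comp (tendsto_atTop_add_const_right _ δ tendsto_id)).sub hℓ
  filter_upwards [hF_incr.eventually (lt_mem_nhds (neg_neg_of_pos (by positivity : 0 < ε / 2 * δ))),
    eventually_ge_atTop a] with t hlt ht
  by_contra! hEt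
  have hdrop := sub_le_neg_mul_of_hasDerivAt_le_neg hδ.le
    (fun x hx => hEa x (ht.trans hx.1)) (fun x hx => hE'a x (ht.trans hx.1))
    (fun x hx => hFa x (ht.trans hx.1)) fun x hx => hF'a x (ht.trans hx.1)
  nlinarith

section

variable {α : Type*} {l : Filter α}

theorem Filter.boundedAtFilter_of_abs_le {f : α → ℝ} (C : ℝ) (h : ∀ᶠ t in l, |f t| ≤ C) :
    BoundedAtFilter l f :=
  IsBigO.of_bound C (h.mono fun t ht => by simpa using ht)

theorem Filter.boundedAtFilter_const_mul_sin (l : Filter α) (c : ℝ) (u : α → ℝ) :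
    BoundedAtFilter l fun t => c * sin (u t) :=
  boundedAtFilter_of_abs_le |c| <| Eventually.of_forall fun t => by
    rw [abs_mul]
    exact mul_le_of_le_one_right (abs_nonneg c) (abs_sin_le_one _)

theorem Filter.BoundedAtFilter.of_add_mul_add_eq_zero {x' x'' H g : α → ℝ} {k : ℝ}
    (h : ∀ᶠ t in l, x'' t + k * H t * x' t + g t = 0)
    (hH : BoundedAtFilter l H) (hx' : BoundedAtFilter l x') (hg : BoundedAtFilter l g) :
    BoundedAtFilter l x'' :=
  ((((const_boundedAtFilter l k).mul hH).mul hx').add hg).neg.congr'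
    (h.mono fun t ht => by simp only [Pi.neg_apply, Pi.add_apply, Pi.mul_apply,
      Function.const_apply]; linarith) EventuallyEq.rfl

theorem abs_le_three_mul_abs_of_three_mul_sq_eq {h r p q v : ℝ}
    (hfr : 3 * h ^ 2 = r + p ^ 2 / 2 + q ^ 2 / 2 + v) (hr : 0 ≤ r) (hv : 0 ≤ v) :
    |p| ≤ 3 * |h| := by
  rw [← abs_of_pos (by norm_num : (0 : ℝ) < 3), ← abs_mul, ← sq_le_sq]
  nlinarith [sq_nonneg q, sq_nonneg h]

theorem Filter.BoundedAtFilter.of_three_mul_sq_eq {H ρ p q W : α → ℝ}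
    (hH : BoundedAtFilter l H)
    (hfried : ∀ᶠ t in l, 3 * H t ^ 2 = ρ t + p t ^ 2 / 2 + q t ^ 2 / 2 + W t)
    (hρ : ∀ᶠ t in l, 0 ≤ ρ t) (hW : ∀ᶠ t in l, 0 ≤ W t) :
    BoundedAtFilter l ρ ∧ BoundedAtFilter l p ∧ BoundedAtFilter l q := by
  have hfried' : ∀ᶠ t in l, 3 * H t ^ 2 = ρ t + q t ^ 2 / 2 + p t ^ 2 / 2 + W t :=
    hfried.mono fun t ht => by linarith
  refine ⟨(IsBigO.of_bound 3 ?_).trans (hH.mul hH), (IsBigO.of_bound 3 ?_).trans hH,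
    (IsBigO.of_bound 3 ?_).trans hH⟩
  · filter_upwards [hfried, hρ, hW] with t ht hρt hWt
    simp only [Real.norm_eq_abs, Pi.mul_apply, abs_of_nonneg hρt, abs_mul_self]
    nlinarith [sq_nonneg (p t), sq_nonneg (q t)]
  · filter_upwards [hfried, hρ, hW] with t ht hρt hWt
    exact abs_le_three_mul_abs_of_three_mul_sq_eq ht hρt hWt
  · filter_upwards [hfried', hρ, hW] with t ht hρt hWt
    exact abs_le_three_mul_abs_of_three_mul_sq_eq ht hρt hWt

theorem tendsto_zero_of_sq_le {p E : α → ℝ} (h : ∀ᶠ t in l, p t ^ 2 ≤ E t)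
    (hE : Tendsto E l (𝓝 0)) : Tendsto p l (𝓝 0) :=
  squeeze_zero_norm' (h.mono fun t ht => Real.abs_le_sqrt ht) (by simpa using hE.sqrt)

theorem tendsto_zero_of_add_sq_div_two_add_sq_div_two {r p q : α → ℝ}
    (hr : ∀ᶠ t in l, 0 ≤ r t)
    (h : Tendsto (fun t => r t + p t ^ 2 / 2 + q t ^ 2 / 2) l (𝓝 0)) :
    Tendsto r l (𝓝 0) ∧ Tendsto p l (𝓝 0) ∧ Tendsto q l (𝓝 0) := by
  have h2 : Tendsto (fun t => 2 * (r t + p t ^ 2 / 2 + q t ^ 2 / 2)) l (𝓝 0) := by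
    simpa using h.const_mul 2
  refine ⟨squeeze_zero' hr (hr.mono fun t ht => ?_) h,
    tendsto_zero_of_sq_le (hr.mono fun t ht => ?_) h2,
    tendsto_zero_of_sq_le (hr.mono fun t ht => ?_) h2⟩ <;>
  nlinarith [sq_nonneg (p t), sq_nonneg (q t)]

end

theorem axion_local_energy_estimates_general
    (t₀ μ₁ μ₂ μ₃ f₁ f₂ n : ℝ)
    (H H' ρ ρ' φ₁ φ₁' φ₁'' φ₂ φ₂' φ₂'' : ℝ → ℝ)
    -- the potential
    (V : ℝ → ℝ → ℝ)
    (hV : ∀ x y, V x y =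
      2 * μ₁ ^ 4 * Real.sin (x / (2 * f₁)) ^ 2 +
      2 * μ₂ ^ 4 * Real.sin (y / (2 * f₂)) ^ 2 +
      2 * μ₃ ^ 4 * Real.sin (x / (2 * f₁) - n * y / (2 * f₂)) ^ 2)
    -- differentiability
    (hHd : ∀ t, t₀ ≤ t → HasDerivAt H (H' t) t)
    (hρd : ∀ t, t₀ ≤ t → HasDerivAt ρ (ρ' t) t)
    (hφ₁d' : ∀ t, t₀ ≤ t → HasDerivAt φ₁' (φ₁'' t) t)
    (hφ₂d' : ∀ t, t₀ ≤ t → HasDerivAt φ₂' (φ₂'' t) t)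
    -- Friedmann constraint
    (hfried : ∀ t, t₀ ≤ t →
      3 * (H t) ^ 2 = ρ t + (φ₁' t) ^ 2 / 2 + (φ₂' t) ^ 2 / 2 + V (φ₁ t) (φ₂ t))
    -- Raychaudhuri equation
    (hray : ∀ t, t₀ ≤ t → 2 * H' t = -(ρ t) - (φ₁' t) ^ 2 - (φ₂' t) ^ 2)
    -- continuity equation and nonnegativity of the dust density
    (hcont : ∀ t, t₀ ≤ t → ρ' t + 3 * H t * ρ t = 0)
    (hρ : ∀ t, t₀ ≤ t → 0 ≤ ρ t)
    -- Klein–Gordon equations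
    (hKG₁ : ∀ t, t₀ ≤ t →
      φ₁'' t + 3 * H t * φ₁' t + (μ₁ ^ 4 / f₁) * Real.sin (φ₁ t / f₁)
        + (μ₃ ^ 4 / f₁) * Real.sin (φ₁ t / f₁ - n * φ₂ t / f₂) = 0)
    (hKG₂ : ∀ t, t₀ ≤ t →
      φ₂'' t + 3 * H t * φ₂' t + (μ₂ ^ 4 / f₂) * Real.sin (φ₂ t / f₂)
        - n * (μ₃ ^ 4 / f₂) * Real.sin (φ₁ t / f₁ - n * φ₂ t / f₂) = 0)
    -- positivity of the expansion
    (hHpos : ∀ t, t₀ ≤ t → 0 < H t) :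
    Tendsto ρ atTop (𝓝 0) ∧ Tendsto φ₁' atTop (𝓝 0) ∧ Tendsto φ₂' atTop (𝓝 0) ∧
      Tendsto (fun t => 3 * (H t) ^ 2 - V (φ₁ t) (φ₂ t)) atTop (𝓝 0) := by
  have eventually_of_ge {P : ℝ → Prop} (h : ∀ t, t₀ ≤ t → P t) : ∀ᶠ t in atTop, P t :=
    (eventually_ge_atTop t₀).mono h
  have hV0 : ∀ x y, 0 ≤ V x y := fun x y => by rw [hV]; positivity
  have hH_le : ∀ t, t₀ ≤ t → H t ≤ H t₀ := fun t ht => by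
    have := sub_le_mul_sub_of_hasDerivAt_le (C := 0) ht (fun s hs => hHd s hs.1) fun s hs => by
      nlinarith [hray s hs.1, hρ s hs.1]
    linarith
  have hHb : BoundedAtFilter atTop H := boundedAtFilter_of_abs_le (H t₀) <|
    eventually_of_ge fun t ht => (abs_of_pos (hHpos t ht)).trans_le (hH_le t ht)
  obtain ⟨hρb, hφ₁'b, hφ₂'b⟩ := hHb.of_three_mul_sq_eq (eventually_of_ge hfried)
    (eventually_of_ge hρ) (.of_forall fun t => hV0 (φ₁ t) (φ₂ t))
  have hρ'b : BoundedAtFilter atTop ρ' := .of_add_mul_add_eq_zero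
    (eventually_of_ge fun t ht => (add_zero _).trans (hcont t ht)) hHb hρb
    (const_boundedAtFilter _ 0)
  have hφ₁''b : BoundedAtFilter atTop φ₁'' := .of_add_mul_add_eq_zero
    (eventually_of_ge fun t ht => (add_assoc _ _ _).symm.trans (hKG₁ t ht)) hHb hφ₁'b
    ((boundedAtFilter_const_mul_sin _ _ _).add (boundedAtFilter_const_mul_sin _ _ _))
  have hφ₂''b : BoundedAtFilter atTop φ₂'' := .of_add_mul_add_eq_zero
    (eventually_of_ge fun t ht => (add_sub_assoc _ _ _).symm.trans (hKG₂ t ht)) hHb hφ₂'b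
    ((boundedAtFilter_const_mul_sin _ _ _).sub (boundedAtFilter_const_mul_sin _ _ _))
  have hE : Tendsto (fun t => ρ t + φ₁' t ^ 2 / 2 + φ₂' t ^ 2 / 2) atTop (𝓝 0) :=
    tendsto_zero_of_hasDerivAt_le_neg (m := 0) (F := fun t => 2 * H t)
      (E' := fun t => ρ' t + φ₁' t * φ₁'' t + φ₂' t * φ₂'' t)
      (eventually_of_ge fun t ht =>
        (((hρd t ht).fun_add (((hφ₁d' t ht).fun_pow 2).div_const 2)).fun_add
          (((hφ₂d' t ht).fun_pow 2).div_const 2)).congr_deriv (by ring))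
      ((hρ'b.add (hφ₁'b.mul hφ₁''b)).add (hφ₂'b.mul hφ₂''b))
      (eventually_of_ge fun t ht => by have := hρ t ht; positivity)
      (eventually_of_ge fun t ht => (hHd t ht).const_mul 2)
      (eventually_of_ge fun t ht => by nlinarith [hray t ht, hρ t ht])
      (eventually_of_ge fun t ht => by linarith [hHpos t ht])
  obtain ⟨hρ0, hφ₁'0, hφ₂'0⟩ :=
    tendsto_zero_of_add_sq_div_two_add_sq_div_two (eventually_of_ge hρ) hE
  refine ⟨hρ0, hφ₁'0, hφ₂'0, hE.congr' (eventually_of_ge fun t ht => ?_)⟩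
  linarith [hfried t ht]

/-- Theorem 1 (local energy estimates) for the axion-like two-scalar-field FLRW cosmology:
along any solution with `H > 0`, the matter density and the scalar field velocities tend to
zero and `3H²` approaches the potential energy `V(φ₁, φ₂)`. -/
theorem axion_local_energy_estimates
    (t₀ μ₁ μ₂ μ₃ f₁ f₂ n : ℝ) (hf₁ : f₁ ≠ 0) (hf₂ : f₂ ≠ 0)
    (H H' ρ ρ' φ₁ φ₁' φ₁'' φ₂ φ₂' φ₂'' : ℝ → ℝ)
    -- the potential
    (V : ℝ → ℝ → ℝ)
    (hV : ∀ x y, V x y =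
      2 * μ₁ ^ 4 * Real.sin (x / (2 * f₁)) ^ 2 +
      2 * μ₂ ^ 4 * Real.sin (y / (2 * f₂)) ^ 2 +
      2 * μ₃ ^ 4 * Real.sin (x / (2 * f₁) - n * y / (2 * f₂)) ^ 2)
    -- differentiability
    (hHd : ∀ t, t₀ ≤ t → HasDerivAt H (H' t) t)
    (hρd : ∀ t, t₀ ≤ t → HasDerivAt ρ (ρ' t) t)
    (hφ₁d : ∀ t, t₀ ≤ t → HasDerivAt φ₁ (φ₁' t) t)
    (hφ₁d' : ∀ t, t₀ ≤ t → HasDerivAt φ₁' (φ₁'' t) t)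
    (hφ₂d : ∀ t, t₀ ≤ t → HasDerivAt φ₂ (φ₂' t) t)
    (hφ₂d' : ∀ t, t₀ ≤ t → HasDerivAt φ₂' (φ₂'' t) t)
    -- Friedmann constraint
    (hfried : ∀ t, t₀ ≤ t →
      3 * (H t) ^ 2 = ρ t + (φ₁' t) ^ 2 / 2 + (φ₂' t) ^ 2 / 2 + V (φ₁ t) (φ₂ t))
    -- Raychaudhuri equation
    (hray : ∀ t, t₀ ≤ t → 2 * H' t = -(ρ t) - (φ₁' t) ^ 2 - (φ₂' t) ^ 2)
    -- continuity equation and nonnegativity of the dust density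
    (hcont : ∀ t, t₀ ≤ t → ρ' t + 3 * H t * ρ t = 0)
    (hρ : ∀ t, t₀ ≤ t → 0 ≤ ρ t)
    -- Klein–Gordon equations
    (hKG₁ : ∀ t, t₀ ≤ t →
      φ₁'' t + 3 * H t * φ₁' t + (μ₁ ^ 4 / f₁) * Real.sin (φ₁ t / f₁)
        + (μ₃ ^ 4 / f₁) * Real.sin (φ₁ t / f₁ - n * φ₂ t / f₂) = 0)
    (hKG₂ : ∀ t, t₀ ≤ t →
      φ₂'' t + 3 * H t * φ₂' t + (μ₂ ^ 4 / f₂) * Real.sin (φ₂ t / f₂)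
        - n * (μ₃ ^ 4 / f₂) * Real.sin (φ₁ t / f₁ - n * φ₂ t / f₂) = 0)
    -- positivity of the expansion
    (hH0 : 0 < H t₀) (hHpos : ∀ t, t₀ ≤ t → 0 < H t) :
    Tendsto ρ atTop (𝓝 0) ∧ Tendsto φ₁' atTop (𝓝 0) ∧ Tendsto φ₂' atTop (𝓝 0) ∧
      Tendsto (fun t => 3 * (H t) ^ 2 - V (φ₁ t) (φ₂ t)) atTop (𝓝 0) :=
  axion_local_energy_estimates_general t₀ μ₁ μ₂ μ₃ f₁ f₂ n H H' ρ ρ' φ₁ φ₁' φ₁'' φ₂ φ₂' φ₂'' V hV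
    hHd hρd hφ₁d' hφ₂d' hfried hray hcont hρ hKG₁ hKG₂ hHpos
end

section
/- Suppose Ω̄_t(0) ∈ (0,1), Ω̄₁(0), Ω̄₂(0) ≥ 0 with Ω̄₁(0)+Ω̄₂(0) ≤ Ω̄_t(0), and H₀ > 0. Then the functions Ω̄_t(τ) = Ω̄_t(0)/(Ω̄_t(0)+e^{3τ}(1−Ω̄_t(0))), H(τ) = H₀e^{−3τ/2}√(Ω̄_t(0)+e^{3τ}(1−Ω̄_t(0))), Ω̄ᵢ(τ) = Ω̄ᵢ(0)/(Ω̄_t(0)+e^{3τ}(1−Ω̄_t(0))) (i = 1,2), Ω̄(τ) = (Ω̄_t(0)−Ω̄₁(0)−Ω̄₂(0))/(Ω̄_t(0)+e^{3τ}(1−Ω̄_t(0))) solve the system dΩ̄₁/dτ = −3Ω̄₁(1−Ω̄_t), dΩ̄₂/dτ = −3Ω̄₂(1−Ω̄_t), dΩ̄/dτ = −3Ω̄(1−Ω̄_t), dH/dτ = −(3/2)HΩ̄_t, where Ω̄_t = Ω̄₁+Ω̄₂+Ω̄, and lim_{τ→∞}(H, Ω̄_t, Ω̄, Ω̄₁,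 Ω̄₂) = (H₀√(1−Ω̄_t(0)), 0, 0, 0, 0). -/
open Set Filter Topology Real

/-!
Every unknown is a constant divided by `D τ = Ω̄_t(0) + e^{3τ} (1 - Ω̄_t(0))`, and `D' = 3 (D - Ω̄_t(0))`.
Hence `c / D` obeys the logistic-type law `(c / D)' = -3 (c / D) (1 - Ω̄_t(0) / D)`, the three densities
add up to `Ω̄_t = Ω̄_t(0) / D`, and `H = H₀ e^{-3τ/2} √D` obeys `H' = -(3/2) H Ω̄_t`. As `τ → ∞`, `D → ∞`
while `e^{-3τ} D → 1 - Ω̄_t(0)`, which gives the limits.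
-/

theorem hasDerivAt_add_exp_mul (a b k τ : ℝ) :
    HasDerivAt (fun x => a + exp (k * x) * b) (k * (a + exp (k * τ) * b - a)) τ := by
  refine ((((hasDerivAt_id τ).const_mul k).exp.mul_const b).const_add a).congr_deriv ?_
  simp only [id, mul_one]
  ring

theorem tendsto_add_exp_mul_atTop (a : ℝ) {b k : ℝ} (hb : 0 < b) (hk : 0 < k) :
    Tendsto (fun x => a + exp (k * x) * b) atTop atTop :=
  tendsto_atTop_add_const_left _ a <|
    (tendsto_exp_atTop.comp (tendsto_id.const_mul_atTop hk)).atTop_mul_const hb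

theorem tendsto_exp_neg_half_mul_sqrt_add_exp_mul (a b : ℝ) {k : ℝ} (hk : 0 < k) :
    Tendsto (fun x => exp (-(k * x) / 2) * √(a + exp (k * x) * b)) atTop (𝓝 (√b)) := by
  have hdecay : Tendsto (fun x => a * exp (-(k * x)) + b) atTop (𝓝 b) := by
    simpa using ((tendsto_exp_neg_atTop_nhds_zero.comp
      (tendsto_id.const_mul_atTop hk)).const_mul a).add_const b
  refine ((continuous_sqrt.tendsto b).comp hdecay).congr fun x => ?_
  have hinv : exp (-(k * x)) * exp (k * x) = 1 := by rw [← exp_add]; simp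
  calc √(a * exp (-(k * x)) + b) = √(exp (-(k * x)) * (a + exp (k * x) * b)) := by
        congr 1; linear_combination (-b) * hinv
    _ = exp (-(k * x) / 2) * √(a + exp (k * x) * b) := by
        rw [sqrt_mul (exp_nonneg _), ← exp_half]

section
variable {D : ℝ → ℝ} {a k τ : ℝ}

theorem HasDerivAt.const_div_of_hasDerivAt_affine (hD : HasDerivAt D (k * (D τ - a)) τ)
    (h0 : D τ ≠ 0) (c : ℝ) :
    HasDerivAt (fun x => c / D x) (-k * (c / D τ) * (1 - a / D τ)) τ := by
  refine ((hasDerivAt_const τ c).div hD h0).congr_deriv ?_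
  field_simp
  ring

theorem HasDerivAt.exp_neg_half_mul_sqrt_of_hasDerivAt_affine
    (hD : HasDerivAt D (k * (D τ - a)) τ) (h0 : 0 < D τ) :
    HasDerivAt (fun x => Real.exp (-(k * x) / 2) * √(D x))
      (-(k / 2) * (Real.exp (-(k * τ) / 2) * √(D τ)) * (a / D τ)) τ := by
  have hexp : HasDerivAt (fun x => Real.exp (-(k * x) / 2))
      (Real.exp (-(k * τ) / 2) * (-k / 2)) τ := by
    refine ((((hasDerivAt_id τ).const_mul k).fun_neg.div_const 2).exp).congr_deriv ?_
    simp only [id, mul_one, neg_div]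
  refine (hexp.mul (hD.sqrt h0.ne')).congr_deriv ?_
  have hs : 0 < √(D τ) := sqrt_pos.2 h0
  field_simp
  rw [sq_sqrt h0.le]
  ring

end

theorem averaged_system_explicit_solution_general
    (A₁ A₂ At H₀ : ℝ)
    (hAt : At ∈ Ioo (0 : ℝ) 1)
    (D Ωt H Ω₁ Ω₂ Ωm : ℝ → ℝ)
    (hD : ∀ τ, D τ = At + Real.exp (3 * τ) * (1 - At))
    (hΩt : ∀ τ, Ωt τ = At / D τ)
    (hH : ∀ τ, H τ = H₀ * Real.exp (-(3 * τ) / 2) * Real.sqrt (D τ))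
    (hΩ₁ : ∀ τ, Ω₁ τ = A₁ / D τ)
    (hΩ₂ : ∀ τ, Ω₂ τ = A₂ / D τ)
    (hΩm : ∀ τ, Ωm τ = (At - A₁ - A₂) / D τ) :
    (∀ τ : ℝ,
      HasDerivAt Ω₁ (-3 * Ω₁ τ * (1 - (Ω₁ τ + Ω₂ τ + Ωm τ))) τ ∧
      HasDerivAt Ω₂ (-3 * Ω₂ τ * (1 - (Ω₁ τ + Ω₂ τ + Ωm τ))) τ ∧
      HasDerivAt Ωm (-3 * Ωm τ * (1 - (Ω₁ τ + Ω₂ τ + Ωm τ))) τ ∧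
      HasDerivAt H (-(3 / 2) * H τ * (Ω₁ τ + Ω₂ τ + Ωm τ)) τ ∧
      Ωt τ = Ω₁ τ + Ω₂ τ + Ωm τ) ∧
    Tendsto H atTop (𝓝 (H₀ * Real.sqrt (1 - At))) ∧
    Tendsto Ωt atTop (𝓝 0) ∧ Tendsto Ωm atTop (𝓝 0) ∧
    Tendsto Ω₁ atTop (𝓝 0) ∧ Tendsto Ω₂ atTop (𝓝 0) := by
  obtain ⟨hAt0, hAt1⟩ := hAt
  obtain rfl := funext hΩt
  obtain rfl := funext hΩ₁
  obtain rfl := funext hΩ₂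
  obtain rfl := funext hΩm
  obtain rfl : H = fun τ => H₀ * (exp (-(3 * τ) / 2) * √(D τ)) := by
    funext τ; rw [hH, mul_assoc]
  have hDpos (τ : ℝ) : 0 < D τ := by
    have := mul_pos (exp_pos (3 * τ)) (sub_pos.2 hAt1)
    rw [hD]
    linarith
  have hDeriv (τ : ℝ) : HasDerivAt D (3 * (D τ - At)) τ := by
    rw [funext hD]
    exact hasDerivAt_add_exp_mul At (1 - At) 3 τ
  have hDtop : Tendsto D atTop atTop := by
    rw [funext hD]
    exact tendsto_add_exp_mul_atTop At (sub_pos.2 hAt1) three_pos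
  have hsum (τ : ℝ) : A₁ / D τ + A₂ / D τ + (At - A₁ - A₂) / D τ = At / D τ := by
    rw [← add_div, ← add_div]
    congr 1
    ring
  refine ⟨fun τ => ?_, ?_, ?_, ?_, ?_, ?_⟩
  · rw [hsum τ]
    refine ⟨?_, ?_, ?_, ?_, rfl⟩
    · exact (hDeriv τ).const_div_of_hasDerivAt_affine (hDpos τ).ne' A₁
    · exact (hDeriv τ).const_div_of_hasDerivAt_affine (hDpos τ).ne' A₂
    · exact (hDeriv τ).const_div_of_hasDerivAt_affine (hDpos τ).ne' (At - A₁ - A₂)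
    · exact (((hDeriv τ).exp_neg_half_mul_sqrt_of_hasDerivAt_affine (hDpos τ)).const_mul
        H₀).congr_deriv (by ring)
  · rw [funext hD]
    exact (tendsto_exp_neg_half_mul_sqrt_add_exp_mul At (1 - At) three_pos).const_mul H₀
  all_goals exact tendsto_const_nhds.div_atTop hDtop

/-- The explicit functions solve the time-averaged axion-cosmology system and converge to a
de Sitter state with Hubble value `H₀√(1 - Ω̄_t(0))`. -/
theorem averaged_system_explicit_solution
    (A₁ A₂ At H₀ : ℝ)
    (hAt : At ∈ Ioo (0 : ℝ) 1) (hA₁ : 0 ≤ A₁) (hA₂ : 0 ≤ A₂)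
    (hsum : A₁ + A₂ ≤ At) (hH₀ : 0 < H₀)
    (D Ωt H Ω₁ Ω₂ Ωm : ℝ → ℝ)
    (hD : ∀ τ, D τ = At + Real.exp (3 * τ) * (1 - At))
    (hΩt : ∀ τ, Ωt τ = At / D τ)
    (hH : ∀ τ, H τ = H₀ * Real.exp (-(3 * τ) / 2) * Real.sqrt (D τ))
    (hΩ₁ : ∀ τ, Ω₁ τ = A₁ / D τ)
    (hΩ₂ : ∀ τ, Ω₂ τ = A₂ / D τ)
    (hΩm : ∀ τ, Ωm τ = (At - A₁ - A₂) / D τ) :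
    (∀ τ : ℝ,
      HasDerivAt Ω₁ (-3 * Ω₁ τ * (1 - (Ω₁ τ + Ω₂ τ + Ωm τ))) τ ∧
      HasDerivAt Ω₂ (-3 * Ω₂ τ * (1 - (Ω₁ τ + Ω₂ τ + Ωm τ))) τ ∧
      HasDerivAt Ωm (-3 * Ωm τ * (1 - (Ω₁ τ + Ω₂ τ + Ωm τ))) τ ∧
      HasDerivAt H (-(3 / 2) * H τ * (Ω₁ τ + Ω₂ τ + Ωm τ)) τ ∧
      Ωt τ = Ω₁ τ + Ω₂ τ + Ωm τ) ∧
    Tendsto H atTop (𝓝 (H₀ * Real.sqrt (1 - At))) ∧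
    Tendsto Ωt atTop (𝓝 0) ∧ Tendsto Ωm atTop (𝓝 0) ∧
    Tendsto Ω₁ atTop (𝓝 0) ∧ Tendsto Ω₂ atTop (𝓝 0) :=
  averaged_system_explicit_solution_general A₁ A₂ At H₀ hAt D Ωt H Ω₁ Ω₂ Ωm hD hΩt hH hΩ₁ hΩ₂ hΩm
end
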